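/- arXiv:1312.5253 — 2 statements merged into one kernel-verified Lean document; each statement's English description precedes it below -/
import Mathlib

section
/- Let L = -d²/dx² + u and B = -4 d³/dx³ + 6u d/dx + 3u_x be operators acting on smooth functions, where u = u(t,x) is smooth. Then the Lax equation L_t - [B,L] = 0 holds (as an identity of operators, i.e. the operator L_t - [B,L] is multiplication by a function which vanishes) if and only if u satisfies the KdV equation u_t - 6 u u_x + u_{xxx} = 0. -/
open scoped ContDiff

/-- The Schrödinger operator `L = -d²/dx² + u(t,·)`. -/
noncomputable def Lop (u : ℝ → ℝ → ℝ) (t : ℝ) (ψ : ℝ → ℝ) : ℝ → ℝ :=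
  fun x => -(deriv (deriv ψ) x) + u t x * ψ x

/-- The operator `B = -4 d³/dx³ + 6u d/dx + 3 u_x`. -/
noncomputable def Bop (u : ℝ → ℝ → ℝ) (t : ℝ) (ψ : ℝ → ℝ) : ℝ → ℝ :=
  fun x => -4 * iteratedDeriv 3 ψ x + 6 * u t x * deriv ψ x
    + 3 * deriv (fun y => u t y) x * ψ x

private lemma sd {f : ℝ → ℝ} (hf : ContDiff ℝ ∞ f) : ContDiff ℝ ∞ (deriv f) :=
  (contDiff_infty_iff_deriv.mp hf).2

private lemma hd {f : ℝ → ℝ} (hf : ContDiff ℝ ∞ f) :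
    ∀ y : ℝ, HasDerivAt f (deriv f y) y :=
  fun y => (hf.differentiable (by norm_num) y).hasDerivAt

private lemma iteratedDeriv_three (f : ℝ → ℝ) :
    iteratedDeriv 3 f = deriv (deriv (deriv f)) := by
  simp [iteratedDeriv_succ, iteratedDeriv_zero]

private lemma comm1 (v ψ : ℝ → ℝ) (hv : ContDiff ℝ ∞ v) (hψ : ContDiff ℝ ∞ ψ) (x : ℝ) :
    (-4 * iteratedDeriv 3 (fun y => -(deriv (deriv ψ) y) + v y * ψ y) x
        + 6 * v x * deriv (fun y => -(deriv (deriv ψ) y) + v y * ψ y) x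
        + 3 * deriv v x * (-(deriv (deriv ψ) x) + v x * ψ x))
      - (-(deriv (deriv (fun y => -4 * iteratedDeriv 3 ψ y + 6 * v y * deriv ψ y
            + 3 * deriv v y * ψ y)) x)
          + v x * (-4 * iteratedDeriv 3 ψ x + 6 * v x * deriv ψ x + 3 * deriv v x * ψ x))
      = (6 * v x * deriv v x - iteratedDeriv 3 v x) * ψ x := by
  have dψ0 := hd hψ
  have dψ1 := hd (sd hψ)
  have dψ2 := hd (sd (sd hψ))
  have dψ3 := hd (sd (sd (sd hψ)))
  have dψ4 := hd (sd (sd (sd (sd hψ))))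
  have dv0 := hd hv
  have dv1 := hd (sd hv)
  have dv2 := hd (sd (sd hv))
  -- derivatives of L ψ = -ψ'' + v ψ
  have dL1 : ∀ y, HasDerivAt (fun y => -(deriv (deriv ψ) y) + v y * ψ y)
      (-(deriv (deriv (deriv ψ)) y) + (deriv v y * ψ y + v y * deriv ψ y)) y :=
    fun y => ((dψ2 y).neg).add ((dv0 y).mul (dψ0 y))
  have eL1 : deriv (fun y => -(deriv (deriv ψ) y) + v y * ψ y)
      = fun y => -(deriv (deriv (deriv ψ)) y) + (deriv v y * ψ y + v y * deriv ψ y) :=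
    funext fun y => (dL1 y).deriv
  have dL2 : ∀ y, HasDerivAt (deriv (fun y => -(deriv (deriv ψ) y) + v y * ψ y))
      (-(deriv (deriv (deriv (deriv ψ))) y)
        + ((deriv (deriv v) y * ψ y + deriv v y * deriv ψ y)
          + (deriv v y * deriv ψ y + v y * deriv (deriv ψ) y))) y := by
    intro y
    rw [eL1]
    exact ((dψ3 y).neg).add
      (((dv1 y).mul (dψ0 y)).add ((dv0 y).mul (dψ1 y)))
  have eL2 : deriv (deriv (fun y => -(deriv (deriv ψ) y) + v y * ψ y))
      = fun y => -(deriv (deriv (deriv (deriv ψ))) y)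
        + ((deriv (deriv v) y * ψ y + deriv v y * deriv ψ y)
          + (deriv v y * deriv ψ y + v y * deriv (deriv ψ) y)) :=
    funext fun y => (dL2 y).deriv
  have dL3 : ∀ y, HasDerivAt (deriv (deriv (fun y => -(deriv (deriv ψ) y) + v y * ψ y)))
      (-(deriv (deriv (deriv (deriv (deriv ψ)))) y)
        + (((deriv (deriv (deriv v)) y * ψ y + deriv (deriv v) y * deriv ψ y)
            + (deriv (deriv v) y * deriv ψ y + deriv v y * deriv (deriv ψ) y))
          + ((deriv (deriv v) y * deriv ψ y + deriv v y * deriv (deriv ψ) y)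
            + (deriv v y * deriv (deriv ψ) y + v y * deriv (deriv (deriv ψ)) y)))) y := by
    intro y
    rw [eL2]
    exact ((dψ4 y).neg).add
      ((((dv2 y).mul (dψ0 y)).add ((dv1 y).mul (dψ1 y))).add
        (((dv1 y).mul (dψ1 y)).add ((dv0 y).mul (dψ2 y))))
  -- derivatives of B ψ = -4 ψ''' + 6 v ψ' + 3 v' ψ
  have dB1 : ∀ y, HasDerivAt
      (fun y => -4 * deriv (deriv (deriv ψ)) y + 6 * v y * deriv ψ y + 3 * deriv v y * ψ y)
      ((-4 * deriv (deriv (deriv (deriv ψ))) y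
          + (6 * deriv v y * deriv ψ y + 6 * v y * deriv (deriv ψ) y))
        + (3 * deriv (deriv v) y * ψ y + 3 * deriv v y * deriv ψ y)) y :=
    fun y => (((dψ3 y).const_mul (-4)).add
        (((dv0 y).const_mul 6).mul (dψ1 y))).add
      (((dv1 y).const_mul 3).mul (dψ0 y))
  have eB1 : deriv (fun y => -4 * deriv (deriv (deriv ψ)) y + 6 * v y * deriv ψ y
        + 3 * deriv v y * ψ y)
      = fun y => (-4 * deriv (deriv (deriv (deriv ψ))) y
          + (6 * deriv v y * deriv ψ y + 6 * v y * deriv (deriv ψ) y))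
        + (3 * deriv (deriv v) y * ψ y + 3 * deriv v y * deriv ψ y) :=
    funext fun y => (dB1 y).deriv
  have dB2 : ∀ y, HasDerivAt (deriv (fun y => -4 * deriv (deriv (deriv ψ)) y
        + 6 * v y * deriv ψ y + 3 * deriv v y * ψ y))
      ((-4 * deriv (deriv (deriv (deriv (deriv ψ)))) y
          + ((6 * deriv (deriv v) y * deriv ψ y + 6 * deriv v y * deriv (deriv ψ) y)
            + (6 * deriv v y * deriv (deriv ψ) y + 6 * v y * deriv (deriv (deriv ψ)) y)))
        + ((3 * deriv (deriv (deriv v)) y * ψ y + 3 * deriv (deriv v) y * deriv ψ y)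
          + (3 * deriv (deriv v) y * deriv ψ y + 3 * deriv v y * deriv (deriv ψ) y))) y := by
    intro y
    rw [eB1]
    exact (((dψ4 y).const_mul (-4)).add
        ((((dv1 y).const_mul 6).mul (dψ1 y)).add
          (((dv0 y).const_mul 6).mul (dψ2 y)))).add
      ((((dv2 y).const_mul 3).mul (dψ0 y)).add
        (((dv1 y).const_mul 3).mul (dψ1 y)))
  simp only [iteratedDeriv_three]
  rw [(dL3 x).deriv, (dL1 x).deriv, (dB2 x).deriv]
  ring

/-- The Lax equation `L_t - [B,L] = 0` (as an operator identity on smooth functions,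
where `L_t` is multiplication by `u_t`) holds iff `u` satisfies the KdV equation
`u_t - 6 u u_x + u_{xxx} = 0`. -/
theorem lax_iff_kdv (u : ℝ → ℝ → ℝ)
    (hu : ContDiff ℝ (⊤ : ℕ∞) (fun p : ℝ × ℝ => u p.1 p.2)) :
    (∀ ψ : ℝ → ℝ, ContDiff ℝ (⊤ : ℕ∞) ψ → ∀ t x : ℝ,
        deriv (fun s => u s x) t * ψ x
          - (Bop u t (Lop u t ψ) x - Lop u t (Bop u t ψ) x) = 0)
      ↔ (∀ t x : ℝ,
        deriv (fun s => u s x) t - 6 * u t x * deriv (fun y => u t y) x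
          + iteratedDeriv 3 (fun y => u t y) x = 0) := by
  have key : ∀ ψ : ℝ → ℝ, ContDiff ℝ (⊤ : ℕ∞) ψ → ∀ t x : ℝ,
      Bop u t (Lop u t ψ) x - Lop u t (Bop u t ψ) x
        = (6 * u t x * deriv (fun y => u t y) x
            - iteratedDeriv 3 (fun y => u t y) x) * ψ x := by
    intro ψ hψ t x
    have hv : ContDiff ℝ ∞ (fun y => u t y) :=
      (hu.of_le (by simp)).comp (contDiff_const.prodMk contDiff_id)
    exact comm1 (fun y => u t y) ψ hv (hψ.of_le (by simp)) x
  constructor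
  · intro H t x
    have h1 := H (fun _ => 1) contDiff_const t x
    rw [key (fun _ => 1) contDiff_const t x] at h1
    linarith
  · intro H ψ hψ t x
    rw [key ψ hψ t x]
    have h1 := H t x
    have h2 : deriv (fun s => u s x) t
        = 6 * u t x * deriv (fun y => u t y) x
          - iteratedDeriv 3 (fun y => u t y) x := by linarith
    rw [h2]; ring
end

section
/- Consider the 2×2 linear system with matrix entries a₁₁ = 𝒜/(λ₁ - conj(λ₁)), a₁₂ = ℬ/(λ₁ - conj(λ₂)), a₂₁ = ℬ/(λ₂ - conj(λ₁)), a₂₂ = 𝒜/(λ₂ - conj(λ₂)), where λ₁ = (r-m+is)(cos θ - 1), λ₂ = (r-m-is)(cos θ + 1), 𝒜, ℬ ∈ ℝ, s > 0, sin θ ≠ 0. Then the determinant a₁₁a₂₂ - a₁₂a₂₁ equals F/(4s²sin²θ·((r-m)²+s²)) up to sign, where F = 𝒜²((r-m)² + s²) - ℬ² s² sin²θ; in particular the system is uniquely solvable if and only if F ≠ 0. -/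
open Complex ComplexConjugate

/-!
Both diagonal denominators are of the form `z - conj z = 2 i Im z`, and the two off-diagonal
denominators are `u` and `-conj u` for `u = λ₁ - conj λ₂`. Hence `a₁₁ a₂₂ - a₁₂ a₂₁` is the negative
of the real number `𝒜² / (4 Im λ₁ Im λ₂) - ℬ² / |u|²`, and here `Im λ₁ Im λ₂ = s² sin² θ` and
`|u|² = 4 ((r - m)² + s²)`.
-/

theorem sub_conj_mul_sub_conj (z w : ℂ) :
    (z - conj z) * (w - conj w) = ((-(4 * z.im * w.im) : ℝ) : ℂ) := by
  rw [sub_conj, sub_conj]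
  push_cast
  linear_combination (4 * (z.im : ℂ) * w.im) * I_sq

theorem sub_conj_mul_sub_conj_swap (z w : ℂ) :
    (z - conj w) * (w - conj z) = ((-normSq (z - conj w) : ℝ) : ℂ) := by
  rw [ofReal_neg, ← mul_conj]
  simp only [map_sub, conj_conj]
  ring

theorem div_sub_conj_det (A B : ℝ) (z w : ℂ) :
    A / (z - conj z) * (A / (w - conj w)) - B / (z - conj w) * (B / (w - conj z))
      = -((A ^ 2 / (4 * z.im * w.im) - B ^ 2 / normSq (z - conj w) : ℝ) : ℂ) := by
  rw [div_mul_div_comm, div_mul_div_comm, sub_conj_mul_sub_conj, sub_conj_mul_sub_conj_swap]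
  push_cast
  rw [div_neg, div_neg]
  ring

section Eigenvalues

variable (r m s c : ℝ)

theorem im_add_I_mul_mul_sub_one : (((r : ℂ) - m + I * s) * (c - 1)).im = s * (c - 1) := by
  simp

theorem im_sub_I_mul_mul_add_one : (((r : ℂ) - m - I * s) * (c + 1)).im = -(s * (c + 1)) := by
  simp

theorem normSq_sub_conj_eigenvalues :
    normSq (((r : ℂ) - m + I * s) * (c - 1) - conj (((r : ℂ) - m - I * s) * (c + 1)))
      = 4 * ((r - m) ^ 2 + s ^ 2) := by
  simp only [map_mul, map_sub, map_add, map_one, conj_ofReal, conj_I, neg_mul, sub_neg_eq_add,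
    normSq_apply, sub_re, mul_re, add_re, ofReal_re, I_re, zero_mul, I_im, ofReal_im, mul_zero,
    sub_self, add_zero, one_re, add_im, sub_im, mul_im, one_mul, zero_add, one_im, sub_zero]
  ring

end Eigenvalues

theorem mul_cos_sub_one_mul_neg_mul_cos_add_one (s θ : ℝ) :
    s * (Real.cos θ - 1) * -(s * (Real.cos θ + 1)) = s ^ 2 * Real.sin θ ^ 2 := by
  linear_combination -s ^ 2 * Real.sin_sq_add_cos_sq θ

/-- The determinant of the 2×2 dressing linear system equals, up to sign,
`F/(4s² sin²θ ((r-m)²+s²))` where `F = 𝒜²((r-m)²+s²) - ℬ² s² sin²θ`; in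
particular the system is uniquely solvable iff `F ≠ 0`. -/
theorem dressing_determinant (r m s θ : ℝ) (𝒜 ℬ : ℝ)
    (hs : 0 < s) (hsin : Real.sin θ ≠ 0) :
    let lam₁ : ℂ := ((r : ℂ) - m + Complex.I * s) * ((Real.cos θ : ℝ) - 1)
    let lam₂ : ℂ := ((r : ℂ) - m - Complex.I * s) * ((Real.cos θ : ℝ) + 1)
    let a₁₁ : ℂ := (𝒜 : ℂ) / (lam₁ - (starRingEnd ℂ) lam₁)
    let a₁₂ : ℂ := (ℬ : ℂ) / (lam₁ - (starRingEnd ℂ) lam₂)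
    let a₂₁ : ℂ := (ℬ : ℂ) / (lam₂ - (starRingEnd ℂ) lam₁)
    let a₂₂ : ℂ := (𝒜 : ℂ) / (lam₂ - (starRingEnd ℂ) lam₂)
    let F : ℝ := 𝒜^2 * ((r - m)^2 + s^2) - ℬ^2 * s^2 * (Real.sin θ)^2
    (a₁₁ * a₂₂ - a₁₂ * a₂₁ =
        ((F / (4 * s^2 * (Real.sin θ)^2 * ((r - m)^2 + s^2)) : ℝ) : ℂ) ∨
      a₁₁ * a₂₂ - a₁₂ * a₂₁ =
        -((F / (4 * s^2 * (Real.sin θ)^2 * ((r - m)^2 + s^2)) : ℝ) : ℂ)) ∧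
    (a₁₁ * a₂₂ - a₁₂ * a₂₁ ≠ 0 ↔ F ≠ 0) := by
  intro lam₁ lam₂ a₁₁ a₁₂ a₂₁ a₂₂ F
  have hden : 4 * s ^ 2 * Real.sin θ ^ 2 * ((r - m) ^ 2 + s ^ 2) ≠ 0 := by positivity
  have hdet : a₁₁ * a₂₂ - a₁₂ * a₂₁ =
      -((F / (4 * s ^ 2 * Real.sin θ ^ 2 * ((r - m) ^ 2 + s ^ 2)) : ℝ) : ℂ) := by
    rw [div_sub_conj_det, im_add_I_mul_mul_sub_one, im_sub_I_mul_mul_add_one,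
      normSq_sub_conj_eigenvalues, mul_assoc 4, mul_cos_sub_one_mul_neg_mul_cos_add_one]
    congr 2
    field_simp
    ring
  refine ⟨Or.inr hdet, ?_⟩
  rw [hdet, ne_eq, neg_eq_zero, ofReal_eq_zero, div_eq_zero_iff, or_iff_left hden]
end
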